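/- For any idempotent b-space V over a b-complete idempotent semifield K and any topological space X, the set USC(X, V) of bounded upper semicontinuous maps X → V is a ∧-subspace of the b-space B(X, V) of all bounded maps with pointwise operations. -/

import Mathlib

/-!
Multiplication by a nonzero scalar is invertible and monotone, so it merely relabels the
superlevel sets `{t | b ≼ f t}`; multiplication by zero makes them trivial. The superlevel
set of an infimum in `B(X, V)` is the intersection of the superlevel sets of the members of
the family, hence closed.
-/

/-- An idempotent commutative semigroup. -/
structure IdemSemigroup (S : Type*) where
  add : S → S → S
  add_comm : ∀ x y, add x y = add y x
  add_assoc : ∀ x y z, add (add x y) z = add x (add y z)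
  add_idem : ∀ x, add x x = x

namespace IdemSemigroup
variable {S : Type*}

/-- The canonical order: x ≼ y iff x ⊕ y = y. -/
def le (A : IdemSemigroup S) (x y : S) : Prop := A.add x y = y
def UB (A : IdemSemigroup S) (X : Set S) (b : S) : Prop := ∀ x ∈ X, A.le x b
def LB (A : IdemSemigroup S) (X : Set S) (b : S) : Prop := ∀ x ∈ X, A.le b x
def IsSup (A : IdemSemigroup S) (X : Set S) (s : S) : Prop :=
  A.UB X s ∧ ∀ b, A.UB X b → A.le s b
def IsInf (A : IdemSemigroup S) (X : Set S) (s : S) : Prop :=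
  A.LB X s ∧ ∀ b, A.LB X b → A.le b s
/-- b-completeness: every subset bounded above (including ∅) has a least upper bound. -/
def BComplete (A : IdemSemigroup S) : Prop :=
  ∀ X : Set S, (∃ b, A.UB X b) → ∃ s, A.IsSup X s
/-- Linearly ordered subset. -/
def Chain (A : IdemSemigroup S) (X : Set S) : Prop :=
  ∀ x ∈ X, ∀ y ∈ X, A.le x y ∨ A.le y x

end IdemSemigroup

/-- An idempotent semifield: idempotent semiring with all nonzero elements invertible. -/
structure IdemSemifield (K : Type*) extends IdemSemigroup K where
  mul : K → K → K
  one : K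
  zero : K
  mul_assoc : ∀ x y z, mul (mul x y) z = mul x (mul y z)
  one_mul : ∀ x, mul one x = x
  mul_one : ∀ x, mul x one = x
  zero_add : ∀ x, add zero x = x
  zero_mul : ∀ x, mul zero x = zero
  mul_zero : ∀ x, mul x zero = zero
  left_distrib : ∀ x y z, mul x (add y z) = add (mul x y) (mul x z)
  right_distrib : ∀ x y z, mul (add x y) z = add (mul x z) (mul y z)
  inv_exists : ∀ x, x ≠ zero → ∃ y, mul x y = one ∧ mul y x = one

namespace IdemSemifield
variable {K : Type*}
def BComplete (F : IdemSemifield K) : Prop := F.toIdemSemigroup.BComplete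
def pow (F : IdemSemifield K) (x : K) : ℕ → K
  | 0 => F.one
  | n + 1 => F.mul x (F.pow x n)
/-- Algebraically closed: n-th roots exist. -/
def AlgClosed (F : IdemSemifield K) : Prop :=
  ∀ x : K, ∀ n : ℕ, 0 < n → ∃ y, F.pow y n = x
end IdemSemifield

/-- An idempotent semimodule over an idempotent semifield. -/
structure IdemSemimodule {K : Type*} (F : IdemSemifield K) (V : Type*) extends
    IdemSemigroup V where
  smul : K → V → V
  zero : V
  zero_add : ∀ x, add zero x = x
  smul_smul : ∀ a b x, smul a (smul b x) = smul (F.mul a b) x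
  add_smul : ∀ a b x, smul (F.add a b) x = add (smul a x) (smul b x)
  smul_add : ∀ a x y, smul a (add x y) = add (smul a x) (smul a y)
  zero_smul : ∀ x, smul F.zero x = zero
  one_smul : ∀ x, smul F.one x = x

/-- An idempotent b-space: b-complete semimodule, scalar multiplication compatible
with bounded sups and infs of scalars. -/
structure IdemBSpace {K : Type*} (F : IdemSemifield K) (V : Type*) extends
    IdemSemimodule F V where
  bcomplete : toIdemSemigroup.BComplete
  smul_sup : ∀ (Q : Set K) (x : V) (s : K), Q.Nonempty →
    F.toIdemSemigroup.IsSup Q s →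
    toIdemSemigroup.IsSup ((fun a => smul a x) '' Q) (smul s x)
  smul_inf : ∀ (Q : Set K) (x : V) (s : K), Q.Nonempty →
    (∃ b, F.toIdemSemigroup.UB Q b) →
    F.toIdemSemigroup.IsInf Q s →
    toIdemSemigroup.IsInf ((fun a => smul a x) '' Q) (smul s x)

namespace IdemBSpace
variable {K V : Type*} {F : IdemSemifield K}

def le (B : IdemBSpace F V) (x y : V) : Prop := B.toIdemSemigroup.le x y
def IsSup (B : IdemBSpace F V) (X : Set V) (s : V) : Prop := B.toIdemSemigroup.IsSup X s
def IsInf (B : IdemBSpace F V) (X : Set V) (s : V) : Prop := B.toIdemSemigroup.IsInf X s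
def Chain (B : IdemBSpace F V) (X : Set V) : Prop := B.toIdemSemigroup.Chain X

def Subspace (B : IdemBSpace F V) (W : Set V) : Prop :=
  (∀ x ∈ W, ∀ y ∈ W, B.add x y ∈ W) ∧ (∀ (a : K), ∀ x ∈ W, B.smul a x ∈ W)

/-- wo-closed: sups of bounded linearly ordered subsets and infs of nonempty linearly
ordered subsets (taken in V) belong to the set. -/
def WOClosed (B : IdemBSpace F V) (M : Set V) : Prop :=
  ∀ X ⊆ M, B.Chain X →
    (∀ s, B.IsSup X s → s ∈ M) ∧ (∀ s, X.Nonempty → B.IsInf X s → s ∈ M)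

/-- Archimedean element. -/
def ArchElem (B : IdemBSpace F V) (x : V) : Prop :=
  ∀ y, ∃ a : K, B.le y (B.smul a x)

/-- f is the functional x*: x*(y) = inf { k | k ⊙ x ≽ y }. -/
def IsStar (B : IdemBSpace F V) (x : V) (f : V → K) : Prop :=
  ∀ y, F.toIdemSemigroup.IsInf {k | B.le y (B.smul k x)} (f y)

/-- wo-continuity of the functional f: it preserves sups and infs of bounded
linearly ordered subsets. -/
def WOContStar (B : IdemBSpace F V) (f : V → K) : Prop :=
  (∀ X : Set V, B.Chain X → ∀ s, B.IsSup X s → F.toIdemSemigroup.IsSup (f '' X) (f s)) ∧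
  (∀ X : Set V, B.Chain X → X.Nonempty → ∀ s, B.IsInf X s →
    F.toIdemSemigroup.IsInf (f '' X) (f s))

/-- wo-continuous element: its star functional is wo-continuous. -/
def WOContElem (B : IdemBSpace F V) (x : V) : Prop :=
  ∃ f, B.IsStar x f ∧ B.WOContStar f

/-- Archimedean space: contains a wo-continuous Archimedean element. -/
def ArchSpace (B : IdemBSpace F V) : Prop :=
  ∃ x, B.ArchElem x ∧ B.WOContElem x

/-- The subspace W, with the induced structure, is an Archimedean space. -/
def ArchOn (B : IdemBSpace F V) (W : Set V) : Prop :=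
  ∃ x ∈ W, (∀ y ∈ W, ∃ a : K, B.le y (B.smul a x)) ∧
    ∃ f : V → K,
      (∀ y ∈ W, F.toIdemSemigroup.IsInf {k | B.le y (B.smul k x)} (f y)) ∧
      (∀ X ⊆ W, B.Chain X → ∀ s ∈ W, B.IsSup X s →
        F.toIdemSemigroup.IsSup (f '' X) (f s)) ∧
      (∀ X ⊆ W, B.Chain X → X.Nonempty → ∀ s ∈ W, B.IsInf X s →
        F.toIdemSemigroup.IsInf (f '' X) (f s))

/-- b-linear map of the space into itself. -/
def BLinearMap (B : IdemBSpace F V) (g : V → V) : Prop :=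
  (∀ x y, g (B.add x y) = B.add (g x) (g y)) ∧
  (∀ (a : K) x, g (B.smul a x) = B.smul a (g x)) ∧
  (∀ (X : Set V) s, B.IsSup X s → B.IsSup (g '' X) (g s))

/-- b-linear functional. -/
def BLinearFun (B : IdemBSpace F V) (f : V → K) : Prop :=
  (∀ x y, f (B.add x y) = F.add (f x) (f y)) ∧
  (∀ (a : K) x, f (B.smul a x) = F.mul a (f x)) ∧
  (∀ (X : Set V) s, B.IsSup X s → F.toIdemSemigroup.IsSup (f '' X) (f s))

/-- ∧-subspace: closed under scalar multiplication and infima of nonempty subsets. -/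
def WedgeSub (B : IdemBSpace F V) (W : Set V) : Prop :=
  (∀ (a : K), ∀ x ∈ W, B.smul a x ∈ W) ∧
  (∀ X ⊆ W, X.Nonempty → ∃ s ∈ W, (∀ x ∈ X, B.le s x) ∧
    ∀ b ∈ W, (∀ x ∈ X, B.le b x) → B.le b s)

end IdemBSpace

/-- Bounded upper semicontinuous maps X → K. -/
def USCset {K : Type*} (F : IdemSemifield K) (X : Type*) [TopologicalSpace X] :
    Set (X → K) :=
  {f | (∃ b, ∀ t, F.toIdemSemigroup.le (f t) b) ∧
    ∀ b, IsClosed {t | F.toIdemSemigroup.le b (f t)}}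

namespace IdemSemigroup
variable {S X : Type*} (A : IdemSemigroup S)

theorem le_refl (x : S) : A.le x x := A.add_idem x

theorem le_trans {x y z : S} (hxy : A.le x y) (hyz : A.le y z) : A.le x z := by
  unfold le at *
  rw [← hyz, ← A.add_assoc, hxy]

def IsUSC [TopologicalSpace X] (f : X → S) : Prop := ∀ b, IsClosed {t | A.le b (f t)}

/-- For `⊇`, compare `g` with the bounded lower bound of the family that equals `b` on the
intersection and the least element `z` off it. -/
theorem setOf_le_eq_biInter_of_isGreatest {z : S} (hz : ∀ x, A.le z x) {F : Set (X → S)}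
    {g : X → S} (hlow : ∀ f ∈ F, ∀ t, A.le (g t) (f t))
    (hgreatest : ∀ h : X → S, (∃ b, ∀ t, A.le (h t) b) →
      (∀ f ∈ F, ∀ t, A.le (h t) (f t)) → ∀ t, A.le (h t) (g t))
    (b : S) : {t | A.le b (g t)} = ⋂ f ∈ F, {t | A.le b (f t)} := by
  classical
  ext t
  simp only [Set.mem_iInter, Set.mem_ofPred]
  refine ⟨fun hb f hf => A.le_trans hb (hlow f hf t), fun hb => ?_⟩
  let h : X → S := fun s => if ∀ f ∈ F, A.le b (f s) then b else z
  have h_bdd : ∀ s, A.le (h s) b := fun s => by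
    dsimp only [h]
    split_ifs
    exacts [A.le_refl b, hz b]
  have h_low : ∀ f ∈ F, ∀ s, A.le (h s) (f s) := fun f hf s => by
    dsimp only [h]
    split_ifs with hs
    exacts [hs f hf, hz (f s)]
  have h_at_t : h t = b := if_pos hb
  simpa only [h_at_t] using hgreatest h ⟨b, h_bdd⟩ h_low t

theorem isUSC_of_isGreatest [TopologicalSpace X] {z : S} (hz : ∀ x, A.le z x)
    {F : Set (X → S)} (hF : ∀ f ∈ F, A.IsUSC f) {g : X → S}
    (hlow : ∀ f ∈ F, ∀ t, A.le (g t) (f t))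
    (hgreatest : ∀ h : X → S, (∃ b, ∀ t, A.le (h t) b) →
      (∀ f ∈ F, ∀ t, A.le (h t) (f t)) → ∀ t, A.le (h t) (g t)) :
    A.IsUSC g := fun b => by
  rw [A.setOf_le_eq_biInter_of_isGreatest hz hlow hgreatest b]
  exact isClosed_biInter fun f hf => hF f hf b

end IdemSemigroup

namespace IdemSemimodule
variable {K V X : Type*} {F : IdemSemifield K} (M : IdemSemimodule F V)

theorem smul_le_smul (a : K) {x y : V} (h : M.le x y) : M.le (M.smul a x) (M.smul a y) := by
  unfold IdemSemigroup.le at *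
  rw [← M.smul_add, h]

theorem le_smul_iff {a a' : K} (ha : F.mul a a' = F.one) (ha' : F.mul a' a = F.one)
    (x y : V) : M.le x (M.smul a y) ↔ M.le (M.smul a' x) y := by
  refine ⟨fun h => ?_, fun h => ?_⟩
  · simpa only [M.smul_smul, ha', M.one_smul] using M.smul_le_smul a' h
  · simpa only [M.smul_smul, ha, M.one_smul] using M.smul_le_smul a h

theorem isUSC_smul [TopologicalSpace X] (a : K) {f : X → V} (hf : M.IsUSC f) :
    M.IsUSC fun t => M.smul a (f t) := fun b => by
  by_cases ha : a = F.zero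
  · simp only [ha, M.zero_smul]
    exact isClosed_const
  · obtain ⟨a', ha, ha'⟩ := F.inv_exists a ha
    simp only [M.le_smul_iff ha ha']
    exact hf _

end IdemSemimodule

theorem stmt16_general {K V : Type*} (F : IdemSemifield K)
    (B : IdemBSpace F V) (X : Type*) [TopologicalSpace X] :
    (∀ (a : K), ∀ f : X → V,
      ((∃ b, ∀ t, B.le (f t) b) ∧ ∀ b, IsClosed {t | B.le b (f t)}) →
      ((∃ b, ∀ t, B.le (B.smul a (f t)) b) ∧
        ∀ b, IsClosed {t | B.le b (B.smul a (f t))})) ∧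
    (∀ S : Set (X → V),
      (∀ f ∈ S, (∃ b, ∀ t, B.le (f t) b) ∧ ∀ b, IsClosed {t | B.le b (f t)}) →
      S.Nonempty →
      ∀ g : X → V, (∃ b, ∀ t, B.le (g t) b) →
        ((∀ f ∈ S, ∀ t, B.le (g t) (f t)) ∧
          ∀ h : X → V, (∃ b, ∀ t, B.le (h t) b) →
            (∀ f ∈ S, ∀ t, B.le (h t) (f t)) → ∀ t, B.le (h t) (g t)) →
        (∀ b, IsClosed {t | B.le b (g t)})) := by
  refine ⟨fun a f ⟨⟨b, hb⟩, hf⟩ => ⟨⟨B.smul a b, fun t => B.smul_le_smul a (hb t)⟩,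
    B.isUSC_smul a hf⟩, ?_⟩
  rintro S hS - g - ⟨hlow, hgreatest⟩
  exact B.isUSC_of_isGreatest B.zero_add (fun f hf => (hS f hf).2) hlow hgreatest

/-- USC(X,V) is a ∧-subspace of the b-space B(X,V) of bounded maps: it is closed
under scalar multiplication and under greatest lower bounds (in B(X,V)) of its
nonempty subsets. -/
theorem stmt16 {K V : Type*} (F : IdemSemifield K) (hF : F.BComplete)
    (B : IdemBSpace F V) (X : Type*) [TopologicalSpace X] :
    (∀ (a : K), ∀ f : X → V,
      ((∃ b, ∀ t, B.le (f t) b) ∧ ∀ b, IsClosed {t | B.le b (f t)}) →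
      ((∃ b, ∀ t, B.le (B.smul a (f t)) b) ∧
        ∀ b, IsClosed {t | B.le b (B.smul a (f t))})) ∧
    (∀ S : Set (X → V),
      (∀ f ∈ S, (∃ b, ∀ t, B.le (f t) b) ∧ ∀ b, IsClosed {t | B.le b (f t)}) →
      S.Nonempty →
      ∀ g : X → V, (∃ b, ∀ t, B.le (g t) b) →
        ((∀ f ∈ S, ∀ t, B.le (g t) (f t)) ∧
          ∀ h : X → V, (∃ b, ∀ t, B.le (h t) b) →
            (∀ f ∈ S, ∀ t, B.le (h t) (f t)) → ∀ t, B.le (h t) (g t)) →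
        (∀ b, IsClosed {t | B.le b (g t)})) :=
  stmt16_general F B X
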